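/- For all nonzero x, y ∈ F^4: y ∈ π[x] if and only if x ∈ π[y]. (Hence the adjacency relation 'y lies on the polar line of x' is symmetric.) -/

import Mathlib

open Matrix

noncomputable section

abbrev F (n : ℕ) : Type := GaloisField 2 (2 * n + 1)

def om (n : ℕ) : ℕ := 2 ^ (n + 1)

/-- The four spanning vectors of the polar line `π[x]`. -/
def polarGens (n : ℕ) (x : Fin 4 → F n) : Set (Fin 4 → F n) :=
  {![0, (x 0 * x 1 + x 2 * x 3) ^ 2 ^ n, x 0 ^ om n, x 2 ^ om n],
   ![(x 0 * x 1 + x 2 * x 3) ^ 2 ^ n, 0, x 3 ^ om n, x 1 ^ om n],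
   ![x 0 ^ om n, x 3 ^ om n, 0, (x 0 * x 1 + x 2 * x 3) ^ 2 ^ n],
   ![x 2 ^ om n, x 1 ^ om n, (x 0 * x 1 + x 2 * x 3) ^ 2 ^ n, 0]}

/-- The polar line `π[x]`, as a subspace of `F⁴`. -/
def polarSpan (n : ℕ) (x : Fin 4 → F n) : Submodule (F n) (Fin 4 → F n) :=
  Submodule.span (F n) (polarGens n x)

/-!
Write `σ s = s ^ ω`, `Q(u) = u₀u₁ + u₂u₃`, `ũ = (u₁, u₀, u₃, u₂)`, and `P(t, u)` for the symmetric
matrix with rows `(0, t, u₀, u₂), (t, 0, u₃, u₁), (u₀, u₃, 0, t), (u₂, u₁, t, 0)`, so that `π[x]` is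
the row space of `M(x) = P(t, σx)` with `t = Q(x) ^ 2ⁿ`. In characteristic 2,
`P(t, ũ) P(t, u) = (t² + Q(u)) • 1`, and `t² = σ(Q x) = Q(σx)`, so `N(x) = P(t, (σx)~)` annihilates
`π[x]`. For `x ≠ 0` both `M(x)` and `N(x)` have a nonsingular `2 × 2` minor, so both have rank 2
and `π[x] = ker N(x)`. As `σ t = Q(x)` and `σ² s = s²` (because `2ⁿ ω = q` and `ω² = 2q`), applying
`σ` to `N(y) x` gives `P(Q(y), (y²)~) (σx)`, whose entries are combinations of those of `N(x) y`.
-/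

lemma Matrix.card_le_rank_of_det_submatrix_ne_zero {K m n ι : Type*} [Field K] [Fintype n]
    [Fintype ι] [DecidableEq ι] (M : Matrix m n K) {r : ι → m} {c : ι → n}
    (h : (M.submatrix r c).det ≠ 0) : Fintype.card ι ≤ M.rank :=
  (rank_of_isUnit _ ((isUnit_iff_isUnit_det _).mpr h.isUnit)).symm.le.trans
    (rank_submatrix_le M r c)

namespace PolarLine

section CommRing

variable {R : Type*} [CommRing R]

def quad (u : Fin 4 → R) : R := u 0 * u 1 + u 2 * u 3

def pairSwap (u : Fin 4 → R) : Fin 4 → R := u ∘ ![1, 0, 3, 2]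

def polarMatrix (t : R) (u : Fin 4 → R) : Matrix (Fin 4) (Fin 4) R :=
  !![0, t, u 0, u 2; t, 0, u 3, u 1; u 0, u 3, 0, t; u 2, u 1, t, 0]

lemma polarMatrix_transpose (t : R) (u : Fin 4 → R) : (polarMatrix t u)ᵀ = polarMatrix t u := by
  ext i j; fin_cases i <;> fin_cases j <;> rfl

lemma polarMatrix_map {S : Type*} [CommRing S] (f : R →+* S) (t : R) (u : Fin 4 → R) :
    (polarMatrix t u).map f = polarMatrix (f t) (f ∘ u) := by
  ext i j; fin_cases i <;> fin_cases j <;> simp [polarMatrix]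

lemma quad_comp {S : Type*} [CommRing S] (f : R →+* S) (u : Fin 4 → R) :
    quad (f ∘ u) = f (quad u) := by
  simp [quad]

lemma pairSwap_ne_zero {u : Fin 4 → R} (hu : u ≠ 0) : pairSwap u ≠ 0 := by
  contrapose! hu
  ext i; fin_cases i
  exacts [congrFun hu 1, congrFun hu 0, congrFun hu 3, congrFun hu 2]

variable [CharP R 2]

lemma polarMatrix_pairSwap_mul (t : R) (u : Fin 4 → R) :
    polarMatrix t (pairSwap u) * polarMatrix t u = (t ^ 2 + quad u) • 1 := by
  ext i j; fin_cases i <;> fin_cases j <;>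
    simp only [polarMatrix, pairSwap, quad, mul_apply, Fin.sum_univ_four, of_apply,
      Function.comp_apply, cons_val', cons_val_fin_one, Fin.zero_eta, Fin.mk_one, Fin.reduceFinMk,
      cons_val_zero, cons_val_one, cons_val, Matrix.smul_apply, one_apply, smul_eq_mul] <;>
    grind

lemma polarMatrix_pairSwap_mulVec_comm {t : R} {v y : Fin 4 → R}
    (h : polarMatrix t (pairSwap v) *ᵥ y = 0) :
    polarMatrix (quad y) (pairSwap (y ^ 2)) *ᵥ v = 0 := by
  have e0 := congrFun h 0
  have e1 := congrFun h 1
  have e2 := congrFun h 2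
  have e3 := congrFun h 3
  simp only [polarMatrix, pairSwap, mulVec, dotProduct, Fin.sum_univ_four, of_apply,
    Function.comp_apply, cons_val', cons_val_fin_one, cons_val_zero, cons_val_one, cons_val,
    Pi.zero_apply] at e0 e1 e2 e3
  have two : (2 : R) = 0 := CharTwo.two_eq_zero
  ext i; fin_cases i <;>
    simp only [polarMatrix, pairSwap, quad, mulVec, dotProduct, Fin.sum_univ_four, of_apply,
      Function.comp_apply, cons_val', cons_val_fin_one, Fin.zero_eta, Fin.mk_one, Fin.reduceFinMk,
      cons_val_zero, cons_val_one, cons_val, Pi.zero_apply, Pi.pow_apply]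
  -- the leftover `t`-terms occur twice and cancel in characteristic 2
  · linear_combination y 1 * e2 + y 3 * e0 - y 1 * y 3 * t * two
  · linear_combination y 2 * e1 + y 0 * e3 - y 0 * y 2 * t * two
  · linear_combination y 2 * e0 + y 1 * e3 - y 1 * y 2 * t * two
  · linear_combination y 3 * e1 + y 0 * e2 - y 0 * y 3 * t * two

end CommRing

lemma two_le_rank_polarMatrix {K : Type*} [Field K] (t : K) {u : Fin 4 → K} (hu : u ≠ 0) :
    2 ≤ (polarMatrix t u).rank := by
  obtain ⟨i, hi⟩ := Function.ne_iff.mp hu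
  fin_cases i
  · exact (polarMatrix t u).card_le_rank_of_det_submatrix_ne_zero (r := ![0, 2]) (c := ![0, 2])
      (by rw [det_fin_two]; simpa [polarMatrix] using hi)
  · exact (polarMatrix t u).card_le_rank_of_det_submatrix_ne_zero (r := ![1, 3]) (c := ![1, 3])
      (by rw [det_fin_two]; simpa [polarMatrix] using hi)
  · exact (polarMatrix t u).card_le_rank_of_det_submatrix_ne_zero (r := ![0, 3]) (c := ![0, 3])
      (by rw [det_fin_two]; simpa [polarMatrix] using hi)
  · exact (polarMatrix t u).card_le_rank_of_det_submatrix_ne_zero (r := ![1, 2]) (c := ![1, 2])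
      (by rw [det_fin_two]; simpa [polarMatrix] using hi)

variable {n : ℕ}

def frob (n : ℕ) : F n →+* F n := iterateFrobenius (F n) 2 (n + 1)

lemma frob_apply (t : F n) : frob n t = t ^ om n := rfl

lemma pow_card_eq_self (t : F n) : t ^ 2 ^ (2 * n + 1) = t := by
  have := Fintype.ofFinite (F n)
  have hcard : Fintype.card (F n) = 2 ^ (2 * n + 1) := by
    rw [← Nat.card_eq_fintype_card, GaloisField.card 2 _ (by omega)]
  rw [← hcard, FiniteField.pow_card]

lemma frob_frob (t : F n) : frob n (frob n t) = t ^ 2 := by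
  rw [frob_apply, frob_apply, om, ← pow_mul, ← pow_add,
    show n + 1 + (n + 1) = (2 * n + 1) + 1 by ring, pow_succ, pow_mul, pow_card_eq_self]

lemma frob_pow_two_pow (t : F n) : frob n (t ^ 2 ^ n) = t := by
  rw [frob_apply, om, ← pow_mul, ← pow_add, show n + (n + 1) = 2 * n + 1 by ring,
    pow_card_eq_self]

lemma pow_two_pow_sq (t : F n) : (t ^ 2 ^ n) ^ 2 = frob n t := by
  rw [frob_apply, om, ← pow_mul, ← pow_succ]

def polarSpanMatrix (n : ℕ) (x : Fin 4 → F n) : Matrix (Fin 4) (Fin 4) (F n) :=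
  polarMatrix (quad x ^ 2 ^ n) (frob n ∘ x)

def polarKerMatrix (n : ℕ) (x : Fin 4 → F n) : Matrix (Fin 4) (Fin 4) (F n) :=
  polarMatrix (quad x ^ 2 ^ n) (pairSwap (frob n ∘ x))

lemma range_polarSpanMatrix (x : Fin 4 → F n) :
    LinearMap.range (polarSpanMatrix n x).mulVecLin = polarSpan n x := by
  rw [range_mulVecLin, ← transpose_transpose (polarSpanMatrix n x), col_transpose,
    polarSpanMatrix, polarMatrix_transpose, polarSpan]
  congr 1
  change Set.range ![_, _, _, _] = _
  rw [range_cons, range_cons, range_cons, range_cons_empty]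
  rfl

lemma polarKerMatrix_mul_polarSpanMatrix (x : Fin 4 → F n) :
    polarKerMatrix n x * polarSpanMatrix n x = 0 := by
  rw [polarKerMatrix, polarSpanMatrix, polarMatrix_pairSwap_mul, quad_comp, pow_two_pow_sq,
    CharTwo.add_self_eq_zero, zero_smul]

lemma polarKerMatrix_mulVec_comm {x y : Fin 4 → F n} (h : polarKerMatrix n x *ᵥ y = 0) :
    polarKerMatrix n y *ᵥ x = 0 := by
  have hσ : polarMatrix (quad y) (pairSwap (y ^ 2)) *ᵥ (frob n ∘ x) = 0 :=
    polarMatrix_pairSwap_mulVec_comm h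
  have hσy : frob n ∘ pairSwap (frob n ∘ y) = pairSwap (y ^ 2) := by
    ext i; simp [pairSwap, frob_frob]
  ext i
  apply (frob n).injective
  rw [Pi.zero_apply, map_zero, RingHom.map_mulVec, polarKerMatrix, polarMatrix_map,
    frob_pow_two_pow, hσy, hσ, Pi.zero_apply]

lemma polarSpan_eq_ker {x : Fin 4 → F n} (hx : x ≠ 0) :
    polarSpan n x = LinearMap.ker (polarKerMatrix n x).mulVecLin := by
  have hσx : frob n ∘ x ≠ 0 := fun h ↦
    hx (funext fun i ↦ (map_eq_zero_iff _ (frob n).injective).mp (congrFun h i))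
  have hN : 2 ≤ (polarKerMatrix n x).rank := two_le_rank_polarMatrix _ (pairSwap_ne_zero hσx)
  have hM : 2 ≤ (polarSpanMatrix n x).rank := two_le_rank_polarMatrix _ hσx
  have hdim := LinearMap.finrank_range_add_finrank_ker (polarKerMatrix n x).mulVecLin
  rw [Module.finrank_fin_fun] at hdim
  rw [rank] at hN hM
  rw [← range_polarSpanMatrix]
  refine Submodule.eq_of_le_of_finrank_le ?_ (by omega)
  rw [LinearMap.range_le_ker_iff, ← mulVecLin_mul, polarKerMatrix_mul_polarSpanMatrix,
    mulVecLin_zero]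

end PolarLine

theorem polar_symmetric_general (n : ℕ) (x y : Fin 4 → F n)
    (hx : x ≠ 0) (hy : y ≠ 0) :
    y ∈ polarSpan n x ↔ x ∈ polarSpan n y := by
  simp only [PolarLine.polarSpan_eq_ker hx, PolarLine.polarSpan_eq_ker hy, LinearMap.mem_ker,
    mulVecLin_apply]
  exact ⟨PolarLine.polarKerMatrix_mulVec_comm, PolarLine.polarKerMatrix_mulVec_comm⟩

theorem polar_symmetric (n : ℕ) (hn : 1 ≤ n) (x y : Fin 4 → F n)
    (hx : x ≠ 0) (hy : y ≠ 0) :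
    y ∈ polarSpan n x ↔ x ∈ polarSpan n y :=
  polar_symmetric_general n x y hx hy
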